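/- arXiv:2002.01428 — 5 statements merged into one kernel-verified Lean document; each statement's English description precedes it below -/
import Mathlib

section
/- Let P and Q be probability measures on a measurable space Ω with P absolutely continuous with respect to Q, and let F : Ω → ℝ be a bounded measurable function. Then ∫ F dP − log ∫ exp(F) dQ ≤ KL(P‖Q), i.e. the Donsker–Varadhan objective evaluated at any bounded measurable F is a lower bound on the Kullback–Leibler divergence. -/
open MeasureTheory Real Classical

/-- The Kullback–Leibler divergence `KL(P‖Q) = ∫ log (dP/dQ) dP` when `P ≪ Q` (and the
integral is finite), and `+∞` otherwise, as an extended real number. -/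

noncomputable def KLdiv {Ω : Type*} [MeasurableSpace Ω] (P Q : Measure Ω) : EReal :=
  if P ≪ Q ∧ Integrable (llr P Q) P then ((∫ ω, llr P Q ω ∂P : ℝ) : EReal) else ⊤

/-!
Tilting `Q` by `F` gives the probability measure `Q_F = e^F Q / ∫ e^F dQ`, and
`log (dP/dQ_F) = log (dP/dQ) - F + log ∫ e^F dQ`. Integrating against `P`,
`KL(P‖Q) - (∫ F dP - log ∫ e^F dQ) = KL(P‖Q_F)`, which is nonnegative by Gibbs' inequality.
-/

namespace MeasureTheory

variable {Ω : Type*} [MeasurableSpace Ω] {μ ν : Measure Ω}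

lemma integral_llr_nonneg [IsProbabilityMeasure μ] [IsProbabilityMeasure ν]
    (hμν : μ ≪ ν) (h_int : Integrable (llr μ ν) μ) : 0 ≤ ∫ x, llr μ ν x ∂μ := by
  simpa using InformationTheory.integral_llr_add_sub_measure_univ_nonneg hμν h_int

lemma integral_sub_log_integral_exp_le_integral_llr [IsProbabilityMeasure μ] [SigmaFinite ν]
    {f : Ω → ℝ} (hμν : μ ≪ ν) (hfμ : Integrable f μ) (hfν : Integrable (fun x ↦ exp (f x)) ν)
    (h_int : Integrable (llr μ ν) μ) :
    ∫ x, f x ∂μ - log (∫ x, exp (f x) ∂ν) ≤ ∫ x, llr μ ν x ∂μ := by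
  have : NeZero ν :=
    ⟨fun h ↦ IsProbabilityMeasure.ne_zero μ (Measure.absolutelyContinuous_zero_iff.mp (h ▸ hμν))⟩
  have : IsProbabilityMeasure (ν.tilted f) := isProbabilityMeasure_tilted hfν
  have h_gibbs : 0 ≤ ∫ x, llr μ (ν.tilted f) x ∂μ :=
    integral_llr_nonneg (hμν.trans (absolutelyContinuous_tilted hfν))
      (integrable_llr_tilted_right hμν hfμ h_int hfν)
  rw [integral_llr_tilted_right hμν hfμ hfν h_int] at h_gibbs
  linarith

end MeasureTheory

theorem donsker_varadhan_lower_bound_general {Ω : Type*} [MeasurableSpace Ω]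
    (P Q : Measure Ω) [IsProbabilityMeasure P] [IsProbabilityMeasure Q]
    (F : Ω → ℝ) (hF : Measurable F) (C : ℝ) (hFbdd : ∀ ω, |F ω| ≤ C) :
    (((∫ ω, F ω ∂P) - Real.log (∫ ω, Real.exp (F ω) ∂Q) : ℝ) : EReal) ≤ KLdiv P Q := by
  unfold KLdiv
  split_ifs with h
  · obtain ⟨hPQ, h_int⟩ := h
    have hFP : Integrable F P :=
      .of_bound hF.aestronglyMeasurable C (ae_of_all _ fun ω ↦ hFbdd ω)
    have hexpQ : Integrable (fun ω ↦ exp (F ω)) Q :=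
      .of_bound hF.exp.aestronglyMeasurable (exp C) (ae_of_all _ fun ω ↦ by
        simpa using (abs_le.mp (hFbdd ω)).2)
    exact EReal.coe_le_coe_iff.mpr
      (integral_sub_log_integral_exp_le_integral_llr hPQ hFP hexpQ h_int)
  · exact le_top

/-- The Donsker–Varadhan objective evaluated at any bounded measurable `F` is a lower
bound on the Kullback–Leibler divergence. -/
theorem donsker_varadhan_lower_bound {Ω : Type*} [MeasurableSpace Ω]
    (P Q : Measure Ω) [IsProbabilityMeasure P] [IsProbabilityMeasure Q]
    (hPQ : P ≪ Q) (F : Ω → ℝ) (hF : Measurable F) (C : ℝ) (hFbdd : ∀ ω, |F ω| ≤ C) :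
    (((∫ ω, F ω ∂P) - Real.log (∫ ω, Real.exp (F ω) ∂Q) : ℝ) : EReal) ≤ KLdiv P Q :=
  donsker_varadhan_lower_bound_general P Q F hF C hFbdd
end

section
/- Let P and Q be probability measures on a measurable space Ω with P absolutely continuous with respect to Q and KL(P‖Q) < ∞. Then KL(P‖Q) = sup over all bounded measurable F : Ω → ℝ of ( ∫ F dP − log ∫ exp(F) dQ ) (the Donsker–Varadhan variational representation of the Kullback–Leibler divergence). -/
/-!
If `exp F` is `Q`-integrable, the tilted measure `Q_F = exp F • Q / ∫ exp F ∂Q` satisfies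
`KL(P ‖ Q_F) = KL(P ‖ Q) - ∫ F ∂P + log ∫ exp F ∂Q`, so Gibbs' inequality `KL(P ‖ Q_F) ≥ 0`
bounds every Donsker–Varadhan objective by `KL(P ‖ Q)`. Conversely, let `F_n` be the logarithm
of `dP/dQ` clamped to `[exp (-n), exp n]`: it is bounded by `n`, `∫ exp F_n ∂Q ≤ 1 + exp (-n)`,
and `P`-a.e. `F_n` is `log (dP/dQ)` truncated at `±n`, so by dominated convergence the
objectives of `F_n` tend to `KL(P ‖ Q)`.
-/

open MeasureTheory Real Classical

open Filter Topology

lemma tendsto_integral_max_neg_min {α : Type*} [MeasurableSpace α] {μ : Measure α}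
    {g : α → ℝ} (hg : Integrable g μ) :
    Tendsto (fun n : ℕ ↦ ∫ x, max (-n : ℝ) (min (g x) n) ∂μ) atTop (𝓝 (∫ x, g x ∂μ)) := by
  refine tendsto_integral_of_dominated_convergence (fun x ↦ |g x|)
    (fun n ↦ by fun_prop) hg.abs (fun n ↦ ae_of_all _ fun x ↦ ?_) (ae_of_all _ fun x ↦ ?_)
  · rw [Real.norm_eq_abs, abs_le]
    constructor <;> cases abs_cases (g x) <;> cases max_cases (-n : ℝ) (min (g x) n) <;>
      cases min_cases (g x) (n : ℝ) <;> linarith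
  · refine tendsto_const_nhds.congr' ?_
    filter_upwards [eventually_ge_atTop ⌈|g x|⌉₊] with n hn
    have hgn := abs_le.mp ((Nat.le_ceil _).trans (Nat.cast_le.mpr hn))
    rw [min_eq_left hgn.2, max_eq_right hgn.1]

section LikelihoodRatio

variable {Ω : Type*} [MeasurableSpace Ω] {P Q : Measure Ω}

section UpperBound

variable [IsProbabilityMeasure P] [IsFiniteMeasure Q]

/-- Gibbs' inequality `0 ≤ KL(P ‖ Q.tilted F) = ∫ llr P Q ∂P - ∫ F ∂P + log ∫ exp F ∂Q`. -/
lemma integral_sub_log_integral_exp_le_integral_llr (hPQ : P ≪ Q)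
    (hllr : Integrable (llr P Q) P) {F : Ω → ℝ} (hFP : Integrable F P)
    (hFQ : Integrable (fun ω ↦ exp (F ω)) Q) :
    ∫ ω, F ω ∂P - log (∫ ω, exp (F ω) ∂Q) ≤ ∫ ω, llr P Q ω ∂P := by
  have : NeZero Q := ⟨fun hQ ↦ IsProbabilityMeasure.ne_zero P (by simpa [hQ] using hPQ)⟩
  have := isProbabilityMeasure_tilted hFQ
  have hgibbs := InformationTheory.integral_llr_add_sub_measure_univ_nonneg
    (hPQ.trans (absolutelyContinuous_tilted hFQ)) (integrable_llr_tilted_right hPQ hFP hllr hFQ)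
  rw [integral_llr_tilted_right hPQ hFP hFQ hllr] at hgibbs
  simp only [probReal_univ] at hgibbs
  linarith

lemma integral_sub_log_integral_exp_le_integral_llr_of_abs_le (hPQ : P ≪ Q)
    (hllr : Integrable (llr P Q) P) {F : Ω → ℝ} (hF : Measurable F) {C : ℝ}
    (hC : ∀ ω, |F ω| ≤ C) :
    ∫ ω, F ω ∂P - log (∫ ω, exp (F ω) ∂Q) ≤ ∫ ω, llr P Q ω ∂P := by
  have hF_mem : ∀ ω, F ω ∈ Set.Icc (-C) C := fun ω ↦ abs_le.mp (hC ω)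
  refine integral_sub_log_integral_exp_le_integral_llr hPQ hllr
    (.of_mem_Icc _ _ hF.aemeasurable (ae_of_all _ hF_mem))
    (.of_mem_Icc (exp (-C)) (exp C) hF.exp.aemeasurable (ae_of_all _ fun ω ↦ ?_))
  exact ⟨exp_le_exp.mpr (hF_mem ω).1, exp_le_exp.mpr (hF_mem ω).2⟩

end UpperBound

/-- Unlike `llr P Q`, which is `log 0 = 0` where `dP/dQ` vanishes, this is bounded and its
exponential stays below `dP/dQ + exp (-n)` everywhere. -/
noncomputable def clampedLogRnDeriv (P Q : Measure Ω) (n : ℕ) (ω : Ω) : ℝ :=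
  log (max (exp (-n)) (min (P.rnDeriv Q ω).toReal (exp n)))

lemma measurable_clampedLogRnDeriv (n : ℕ) : Measurable (clampedLogRnDeriv P Q n) := by
  unfold clampedLogRnDeriv
  fun_prop

lemma exp_clampedLogRnDeriv (n : ℕ) (ω : Ω) :
    exp (clampedLogRnDeriv P Q n ω) = max (exp (-n)) (min (P.rnDeriv Q ω).toReal (exp n)) :=
  exp_log ((exp_pos _).trans_le (le_max_left _ _))

lemma abs_clampedLogRnDeriv_le (n : ℕ) (ω : Ω) : |clampedLogRnDeriv P Q n ω| ≤ n := by
  rw [abs_le, ← exp_le_exp, ← exp_le_exp (y := n), exp_clampedLogRnDeriv]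
  exact ⟨le_max_left _ _, max_le (exp_le_exp.mpr (by simp)) (min_le_right _ _)⟩

lemma clampedLogRnDeriv_ae_eq [SigmaFinite P] [SigmaFinite Q] (hPQ : P ≪ Q) :
    ∀ᵐ ω ∂P, ∀ n : ℕ, clampedLogRnDeriv P Q n ω = max (-n : ℝ) (min (llr P Q ω) n) := by
  filter_upwards [Measure.rnDeriv_pos hPQ, hPQ.ae_le (Measure.rnDeriv_lt_top P Q)]
    with ω hpos hfin n
  have hmono := strictMonoOn_log.monotoneOn
  have hf : (P.rnDeriv Q ω).toReal ∈ Set.Ioi 0 := ENNReal.toReal_pos hpos.ne' hfin.ne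
  rw [clampedLogRnDeriv, hmono.map_max (exp_pos _) (lt_min hf (exp_pos _)),
    hmono.map_min hf (exp_pos _), log_exp, log_exp, llr]

lemma integrable_exp_clampedLogRnDeriv [IsFiniteMeasure Q] (n : ℕ) :
    Integrable (fun ω ↦ exp (clampedLogRnDeriv P Q n ω)) Q := by
  refine .of_mem_Icc 0 (exp n) (measurable_clampedLogRnDeriv n).exp.aemeasurable
    (ae_of_all _ fun ω ↦ ?_)
  rw [exp_clampedLogRnDeriv]
  exact ⟨(exp_pos _).le.trans (le_max_left _ _),
    max_le (exp_le_exp.mpr (by simp)) (min_le_right _ _)⟩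

lemma integral_exp_clampedLogRnDeriv_le [IsProbabilityMeasure P] [IsProbabilityMeasure Q]
    (hPQ : P ≪ Q) (n : ℕ) :
    ∫ ω, exp (clampedLogRnDeriv P Q n ω) ∂Q ≤ 1 + exp (-n) := by
  have hf : Integrable (fun ω ↦ (P.rnDeriv Q ω).toReal) Q := Measure.integrable_toReal_rnDeriv
  calc ∫ ω, exp (clampedLogRnDeriv P Q n ω) ∂Q
      ≤ ∫ ω, ((P.rnDeriv Q ω).toReal + exp (-n)) ∂Q := by
        refine integral_mono (integrable_exp_clampedLogRnDeriv n)
          (hf.add (integrable_const _)) fun ω ↦ ?_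
        rw [exp_clampedLogRnDeriv]
        exact max_le (le_add_of_nonneg_left ENNReal.toReal_nonneg)
          ((min_le_left _ _).trans (le_add_of_nonneg_right (exp_pos _).le))
    _ = 1 + exp (-n) := by
        rw [integral_add hf (integrable_const _), Measure.integral_toReal_rnDeriv hPQ]
        simp

lemma tendsto_integral_sub_log_integral_exp_clampedLogRnDeriv
    [IsProbabilityMeasure P] [IsProbabilityMeasure Q] (hPQ : P ≪ Q)
    (hllr : Integrable (llr P Q) P) :
    Tendsto (fun n : ℕ ↦ ∫ ω, clampedLogRnDeriv P Q n ω ∂P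
        - log (∫ ω, exp (clampedLogRnDeriv P Q n ω) ∂Q)) atTop (𝓝 (∫ ω, llr P Q ω ∂P)) := by
  have hintegral : Tendsto (fun n : ℕ ↦ ∫ ω, clampedLogRnDeriv P Q n ω ∂P) atTop
      (𝓝 (∫ ω, llr P Q ω ∂P)) := by
    refine (tendsto_integral_max_neg_min hllr).congr fun n ↦ integral_congr_ae ?_
    filter_upwards [clampedLogRnDeriv_ae_eq hPQ] with ω hω
    exact (hω n).symm
  have hlog : Tendsto (fun n : ℕ ↦ log (1 + exp (-n))) atTop (𝓝 0) := by
    have hexp : Tendsto (fun n : ℕ ↦ exp (-n)) atTop (𝓝 0) :=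
      tendsto_exp_atBot.comp (tendsto_neg_atTop_atBot.comp tendsto_natCast_atTop_atTop)
    simpa [Function.comp_def] using
      (continuousAt_log (by norm_num : (1 + 0 : ℝ) ≠ 0)).tendsto.comp (tendsto_const_nhds.add hexp)
  refine tendsto_of_tendsto_of_tendsto_of_le_of_le (by simpa using hintegral.sub hlog)
    tendsto_const_nhds (fun n ↦ ?_) fun n ↦
      integral_sub_log_integral_exp_le_integral_llr_of_abs_le hPQ hllr
        (measurable_clampedLogRnDeriv n) (abs_clampedLogRnDeriv_le n)
  have hpos := integral_exp_pos (integrable_exp_clampedLogRnDeriv (P := P) (Q := Q) n)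
  gcongr
  exact integral_exp_clampedLogRnDeriv_le hPQ n

end LikelihoodRatio

/-- Donsker–Varadhan variational representation: the Kullback–Leibler divergence equals
the supremum of the Donsker–Varadhan objective over all bounded measurable functions. -/
theorem donsker_varadhan_representation {Ω : Type*} [MeasurableSpace Ω]
    (P Q : Measure Ω) [IsProbabilityMeasure P] [IsProbabilityMeasure Q]
    (hPQ : P ≪ Q) (hKL : KLdiv P Q < ⊤) :
    KLdiv P Q =
      ⨆ F : {F : Ω → ℝ // Measurable F ∧ ∃ C : ℝ, ∀ ω, |F ω| ≤ C},
        (((∫ ω, (F : Ω → ℝ) ω ∂P) - Real.log (∫ ω, Real.exp ((F : Ω → ℝ) ω) ∂Q) : ℝ) : EReal) := by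
  have hllr : Integrable (llr P Q) P := by
    by_contra h
    simp [KLdiv, h] at hKL
  rw [KLdiv, if_pos ⟨hPQ, hllr⟩]
  refine le_antisymm ?_ (iSup_le fun ⟨F, hF, C, hC⟩ ↦ EReal.coe_le_coe_iff.mpr
    (integral_sub_log_integral_exp_le_integral_llr_of_abs_le hPQ hllr hF hC))
  refine le_of_tendsto' (EReal.tendsto_coe.mpr
    (tendsto_integral_sub_log_integral_exp_clampedLogRnDeriv hPQ hllr)) fun n ↦ ?_
  exact le_iSup_of_le (⟨_, measurable_clampedLogRnDeriv n, n, abs_clampedLogRnDeriv_le n⟩ :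
    {F : Ω → ℝ // _}) le_rfl
end

section
/- Let P and Q be probability measures on a measurable space Ω with P absolutely continuous with respect to Q and KL(P‖Q) < ∞, and let F : Ω → ℝ be a bounded measurable function. Define the Gibbs measure G_F by dG_F = exp(F) dQ / (∫ exp(F) dQ). Then KL(P‖Q) − ( ∫ F dP − log ∫ exp(F) dQ ) = KL(P‖G_F); in particular the gap in the Donsker–Varadhan lower bound is nonnegative and equals a Kullback–Leibler divergence. -/
open MeasureTheory Real Classical

/-- The gap in the Donsker–Varadhan lower bound equals the Kullback–Leibler divergence
between `P` and the Gibbs measure `G_F` with density `exp F / ∫ exp F dQ` w.r.t. `Q`. -/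
theorem donsker_varadhan_gap_eq_kl_gibbs {Ω : Type*} [MeasurableSpace Ω]
    (P Q : Measure Ω) [IsProbabilityMeasure P] [IsProbabilityMeasure Q]
    (hPQ : P ≪ Q) (hKL : KLdiv P Q < ⊤)
    (F : Ω → ℝ) (hF : Measurable F) (C : ℝ) (hFbdd : ∀ ω, |F ω| ≤ C) :
    KLdiv P Q - (((∫ ω, F ω ∂P) - Real.log (∫ ω, Real.exp (F ω) ∂Q) : ℝ) : EReal)
      = KLdiv P (Q.tilted F) := by
  have h_int : Integrable (llr P Q) P := by
    by_contra h
    simp [KLdiv, hPQ, h] at hKL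
  have hexpQ : Integrable (fun x ↦ exp (F x)) Q := by
    refine Integrable.mono' (integrable_const (exp C)) (hF.exp.aestronglyMeasurable) ?_
    filter_upwards with x
    rw [Real.norm_eq_abs, abs_of_pos (exp_pos _)]
    exact exp_le_exp.2 ((abs_le.1 (hFbdd x)).2)
  have hFP : Integrable F P := by
    refine Integrable.mono' (integrable_const C) hF.aestronglyMeasurable ?_
    filter_upwards with x using hFbdd x
  have hPG : P ≪ Q.tilted F := hPQ.trans (absolutelyContinuous_tilted hexpQ)
  have h_int' : Integrable (llr P (Q.tilted F)) P :=
    integrable_llr_tilted_right hPQ hFP h_int hexpQ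
  rw [KLdiv, KLdiv, if_pos ⟨hPQ, h_int⟩, if_pos ⟨hPG, h_int'⟩,
    integral_llr_tilted_right hPQ hFP hexpQ h_int]
  norm_cast
  ring
end

section
/- Let X, X̃, U be measurable spaces, let p be a probability measure on X × X̃ × U (the joint distribution of state, task-relevant variables, and control action at one time step), and let c : X × U → ℝ be a bounded measurable cost depending on the state and action coordinates. Let I := KL( μ ‖ μ₁ ⊗ μ₂ ) where μ is the marginal of p on X × X̃ and μ₁, μ₂ are its marginals on X and X̃ (the mutual information between x and x̃ under p). Let β ≥ 1 and let p̌ be a probability measure on X × X̃ × U, absolutely continuous with respect to p, satisfying β · KL(p̌‖p) ≤ I. Then ∫ c dp̌ ≤ ρ_β[c] + I, where ρ_β[c] := (1/β) log ∫ exp(β c) dp is the entropic risk of c under p. -/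
open MeasureTheory Real Classical

lemma my_integral_llr_nonneg {α : Type*} [MeasurableSpace α] {μ ν : Measure α}
    [IsProbabilityMeasure μ] [IsProbabilityMeasure ν] (hμν : μ ≪ ν)
    (h_int : Integrable (llr μ ν) μ) : 0 ≤ ∫ x, llr μ ν x ∂μ := by
  have h_int' : Integrable (llr ν μ) μ := by
    refine (integrable_congr (neg_llr hμν)).mp h_int.neg
  have h_pos : ∀ᵐ x ∂μ, 0 < (ν.rnDeriv μ x).toReal := by
    filter_upwards [Measure.inv_rnDeriv hμν, Measure.rnDeriv_pos hμν,
      hμν.ae_le (Measure.rnDeriv_lt_top μ ν)] with x hinv hpos hlt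
    rw [← hinv, Pi.inv_apply]
    simp only [ENNReal.toReal_inv]
    exact inv_pos.mpr (ENNReal.toReal_pos hpos.ne' hlt.ne)
  have hmono : ∫ x, llr ν μ x ∂μ ≤ ∫ x, ((ν.rnDeriv μ x).toReal - 1) ∂μ := by
    refine integral_mono_ae h_int' (Measure.integrable_toReal_rnDeriv.sub (integrable_const 1)) ?_
    filter_upwards [h_pos] with x hx
    exact (Real.log_le_sub_one_of_pos hx)
  have hle : ∫ x, (ν.rnDeriv μ x).toReal ∂μ ≤ 1 := by
    have := Measure.setIntegral_toReal_rnDeriv_le (μ := ν) (ν := μ) (s := Set.univ)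
      (measure_ne_top ν _)
    simpa using this
  have h2 : ∫ x, ((ν.rnDeriv μ x).toReal - 1) ∂μ
      = ∫ x, (ν.rnDeriv μ x).toReal ∂μ - 1 := by
    rw [integral_sub Measure.integrable_toReal_rnDeriv (integrable_const 1)]
    simp
  have hneg : ∫ x, llr μ ν x ∂μ = - ∫ x, llr ν μ x ∂μ := by
    rw [← integral_neg]
    exact integral_congr_ae ((neg_llr hμν).symm.mono fun x h => by
      simpa using congrArg Neg.neg h.symm)
  rw [hneg]
  have := hmono.trans (by linarith [hle, h2.le] : ∫ x, ((ν.rnDeriv μ x).toReal - 1) ∂μ ≤ 0)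
  linarith

lemma my_dv {α : Type*} [MeasurableSpace α] {μ ν : Measure α}
    [IsProbabilityMeasure μ] [IsProbabilityMeasure ν] (hμν : μ ≪ ν)
    (h_int : Integrable (llr μ ν) μ) {g : α → ℝ} (hg : Integrable g μ)
    (hgν : Integrable (fun x => exp (g x)) ν) :
    ∫ x, g x ∂μ ≤ log (∫ x, exp (g x) ∂ν) + ∫ x, llr μ ν x ∂μ := by
  have hP : IsProbabilityMeasure (ν.tilted g) := isProbabilityMeasure_tilted hgν
  have hμν' : μ ≪ ν.tilted g := hμν.trans (absolutelyContinuous_tilted hgν)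
  have h_int' : Integrable (llr μ (ν.tilted g)) μ :=
    integrable_llr_tilted_right hμν hg h_int hgν
  have h0 : 0 ≤ ∫ x, llr μ (ν.tilted g) x ∂μ := my_integral_llr_nonneg hμν' h_int'
  rw [integral_llr_tilted_right hμν hg hgν h_int] at h0
  linarith


/-- One-step robustness bound: if the test-time joint distribution `p̌` of
(state, task-relevant variables, action) satisfies `β · KL(p̌‖p) ≤ 𝕀[x; x̃]`, then the
expected cost under `p̌` is bounded by the entropic risk plus the mutual information. -/
theorem one_step_robustness_bound
    {X Xt U : Type*} [MeasurableSpace X] [MeasurableSpace Xt] [MeasurableSpace U]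
    (p : Measure (X × Xt × U)) [IsProbabilityMeasure p]
    (c : X × U → ℝ) (hc : Measurable c) (C : ℝ) (hcbdd : ∀ ω, |c ω| ≤ C)
    (I : EReal)
    (hI : I = KLdiv (p.map (fun ω => (ω.1, ω.2.1)))
        ((p.map (fun ω => ω.1)).prod (p.map (fun ω => ω.2.1))))
    (β : ℝ) (hβ : 1 ≤ β)
    (pc : Measure (X × Xt × U)) [IsProbabilityMeasure pc]
    (hac : pc ≪ p) (hshift : ((β : ℝ) : EReal) * KLdiv pc p ≤ I) :
    ((∫ ω, c (ω.1, ω.2.2) ∂pc : ℝ) : EReal)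
      ≤ (((1 / β) * Real.log (∫ ω, Real.exp (β * c (ω.1, ω.2.2)) ∂p) : ℝ) : EReal) + I := by
  have hβ0 : (0:ℝ) < β := lt_of_lt_of_le one_pos hβ
  set f : X × Xt × U → ℝ := fun ω => c (ω.1, ω.2.2) with hf_def
  have hfm : Measurable f := hc.comp (measurable_fst.prodMk measurable_snd.snd)
  have hf_int : Integrable f pc :=
    Integrable.mono' (integrable_const C) hfm.aestronglyMeasurable
      (Filter.Eventually.of_forall fun ω => hcbdd _)
  have hg_int : Integrable (fun ω => β * f ω) pc := hf_int.const_mul β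
  have hexp_int : Integrable (fun ω => Real.exp (β * f ω)) p := by
    refine Integrable.mono' (integrable_const (Real.exp (β * C)))
      ((hfm.const_mul β).exp.aestronglyMeasurable)
      (Filter.Eventually.of_forall fun ω => ?_)
    rw [Real.norm_eq_abs, abs_of_pos (Real.exp_pos _)]
    exact Real.exp_le_exp.mpr (mul_le_mul_of_nonneg_left
      ((le_abs_self _).trans (hcbdd _)) hβ0.le)
  by_cases hint : Integrable (llr pc p) pc
  · -- KL finite
    set K : ℝ := ∫ ω, llr pc p ω ∂pc with hK_def
    have hKL : KLdiv pc p = ((K : ℝ) : EReal) := by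
      rw [KLdiv, if_pos ⟨hac, hint⟩]
    have hK0 : 0 ≤ K := my_integral_llr_nonneg hac hint
    have hdv : ∫ ω, β * f ω ∂pc
        ≤ Real.log (∫ ω, Real.exp (β * f ω) ∂p) + K :=
      my_dv hac hint hg_int hexp_int
    have hmul : ∫ ω, β * f ω ∂pc = β * ∫ ω, f ω ∂pc := integral_const_mul β f
    have hmain : ∫ ω, f ω ∂pc
        ≤ (1 / β) * Real.log (∫ ω, Real.exp (β * f ω) ∂p) + K / β := by
      rw [hmul] at hdv
      have h1 : ∫ ω, f ω ∂pc
          ≤ (Real.log (∫ ω, Real.exp (β * f ω) ∂p) + K) / β :=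
        (le_div_iff₀ hβ0).mpr (by linarith [hdv])
      calc ∫ ω, f ω ∂pc ≤ (Real.log (∫ ω, Real.exp (β * f ω) ∂p) + K) / β := h1
        _ = (1 / β) * Real.log (∫ ω, Real.exp (β * f ω) ∂p) + K / β := by ring
    rw [hKL] at hshift
    cases I with
    | bot =>
      rw [← EReal.coe_mul] at hshift
      exact (EReal.coe_ne_bot _ (le_bot_iff.mp hshift)).elim
    | top =>
      rw [EReal.coe_add_top]
      exact le_top
    | coe r =>
      rw [← EReal.coe_mul, EReal.coe_le_coe_iff] at hshift
      rw [← EReal.coe_add, EReal.coe_le_coe_iff]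
      have h1 : K / β ≤ K := div_le_self hK0 hβ
      have h2 : K ≤ β * K := le_mul_of_one_le_left hK0 hβ
      calc ∫ ω, f ω ∂pc ≤ (1 / β) * Real.log (∫ ω, Real.exp (β * f ω) ∂p) + K / β := hmain
        _ ≤ (1 / β) * Real.log (∫ ω, Real.exp (β * f ω) ∂p) + r := by linarith
  · have hKL : KLdiv pc p = ⊤ := by
      rw [KLdiv, if_neg (fun h => hint h.2)]
    rw [hKL, EReal.coe_mul_top_of_pos hβ0, top_le_iff] at hshift
    rw [hshift, EReal.coe_add_top]
    exact le_top
end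

section
/- (Theorem 1, robustness bound.) Fix a horizon T ∈ ℕ and β ≥ 1. For each t ∈ {0, …, T}, let X_t, X̃_t, U_t be measurable spaces, let p_t be a probability measure on X_t × X̃_t × U_t (the training joint distribution of state x_t, task-relevant variables x̃_t, and action u_t at time t), and let c_t : X_t × U_t → ℝ be a bounded measurable cost. Let 𝕀[x_t; x̃_t] := KL( μ_t ‖ μ_t¹ ⊗ μ_t² ), where μ_t is the marginal of p_t on X_t × X̃_t with marginals μ_t¹, μ_t². For each t let p̌_t be a probability measure on X_t × X̃_t × U_t, absolutely continuous with respect to p_t, satisfying β · KL(p̌_t‖p_t) ≤ 𝕀[x_t; x̃_t]. Then the total expected cost under the shifted (test-time) distributions is bounded by the entropic risk plus mutual information: Σ_{t=0}^{T} ∫ c_t dp̌_t ≤ Σ_{t=0}^{T} ( ρ_β[c_t] + 𝕀[x_t; x̃_t] ), where ρ_β[c_t] := (1/β) log ∫ exp(β c_t) dp_t. -/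
open MeasureTheory Real Classical

lemma kl_nonneg' {Ω : Type*} [MeasurableSpace Ω] (μ ν : Measure Ω)
    [IsProbabilityMeasure μ] [IsProbabilityMeasure ν] (hμν : μ ≪ ν)
    (hint : Integrable (llr μ ν) μ) : 0 ≤ ∫ x, llr μ ν x ∂μ := by
  set g : Ω → ℝ := fun x => ((μ.rnDeriv ν x)⁻¹).toReal with hg
  have hgm : Measurable g := (Measure.measurable_rnDeriv μ ν).inv.ennreal_toReal
  have hgnn : ∀ x, 0 ≤ g x := fun x => ENNReal.toReal_nonneg
  have hle : ∫⁻ x, ENNReal.ofReal (g x) ∂μ ≤ 1 := by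
    rw [← lintegral_rnDeriv_mul hμν (hgm.ennreal_ofReal).aemeasurable]
    calc ∫⁻ x, μ.rnDeriv ν x * ENNReal.ofReal (g x) ∂ν ≤ ∫⁻ _, 1 ∂ν := by
          refine lintegral_mono fun x => ?_
          rcases eq_or_ne (μ.rnDeriv ν x) 0 with h0 | h0
          · simp [h0]
          rcases eq_or_ne (μ.rnDeriv ν x) ⊤ with ht | ht
          · simp [hg, ht]
          · rw [hg]
            simp only []
            rw [ENNReal.ofReal_toReal (by simp [h0]), ENNReal.mul_inv_cancel h0 ht]
      _ = 1 := by simp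
  have hgint : Integrable g μ := by
    refine ⟨hgm.aestronglyMeasurable, ?_⟩
    rw [hasFiniteIntegral_iff_norm]
    refine lt_of_le_of_lt ?_ (lt_of_le_of_lt hle ENNReal.one_lt_top)
    refine le_of_eq (lintegral_congr fun x => ?_)
    rw [Real.norm_eq_abs, abs_of_nonneg (hgnn x)]
  have hptwise : ∀ᵐ x ∂μ, -llr μ ν x ≤ g x - 1 := by
    filter_upwards [Measure.rnDeriv_pos hμν, hμν.ae_le (Measure.rnDeriv_lt_top μ ν)]
      with x hpos hlt
    have htr : 0 < (μ.rnDeriv ν x).toReal := ENNReal.toReal_pos hpos.ne' hlt.ne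
    have : -llr μ ν x = Real.log ((μ.rnDeriv ν x).toReal)⁻¹ := by
      rw [llr_def, Real.log_inv]
    rw [this, hg]
    simp only []
    rw [ENNReal.toReal_inv]
    exact Real.log_le_sub_one_of_pos (inv_pos.2 htr)
  have h1 : ∫ x, -llr μ ν x ∂μ ≤ ∫ x, (g x - 1) ∂μ :=
    integral_mono_ae hint.neg (hgint.sub (integrable_const 1)) hptwise
  have h2 : ∫ x, (g x - 1) ∂μ = (∫ x, g x ∂μ) - 1 := by
    rw [integral_sub hgint (integrable_const 1)]; simp
  have h3 : ∫ x, g x ∂μ ≤ 1 := by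
    rw [integral_eq_lintegral_of_nonneg_ae (ae_of_all _ hgnn) hgm.aestronglyMeasurable]
    calc (∫⁻ x, ENNReal.ofReal (g x) ∂μ).toReal ≤ (1 : ENNReal).toReal :=
          ENNReal.toReal_mono (by simp) hle
      _ = 1 := by simp
  rw [integral_neg] at h1
  linarith

lemma gibbs_ineq {Ω : Type*} [MeasurableSpace Ω] (μ ν : Measure Ω)
    [IsProbabilityMeasure μ] [IsProbabilityMeasure ν] (hμν : μ ≪ ν)
    (f : Ω → ℝ) (hfm : Measurable f) (C : ℝ) (hC : ∀ x, |f x| ≤ C)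
    (hint : Integrable (llr μ ν) μ) :
    ∫ x, f x ∂μ ≤ Real.log (∫ x, Real.exp (f x) ∂ν) + ∫ x, llr μ ν x ∂μ := by
  have hexpν : Integrable (fun x => Real.exp (f x)) ν := by
    refine Integrable.mono' (integrable_const (Real.exp C)) (hfm.exp).aestronglyMeasurable
      (ae_of_all _ fun x => ?_)
    rw [Real.norm_eq_abs, abs_of_pos (Real.exp_pos _)]
    exact Real.exp_le_exp.2 ((abs_le.1 (hC x)).2)
  have hfμ : Integrable f μ :=
    Integrable.mono' (integrable_const C) hfm.aestronglyMeasurable (ae_of_all _ hC)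
  have hρac : μ ≪ ν.tilted f := hμν.trans (absolutelyContinuous_tilted hexpν)
  have : IsProbabilityMeasure (ν.tilted f) := isProbabilityMeasure_tilted hexpν
  have hint' : Integrable (llr μ (ν.tilted f)) μ :=
    integrable_llr_tilted_right hμν hfμ hint hexpν
  have hkey := integral_llr_tilted_right hμν hfμ hexpν hint
  have hnn := kl_nonneg' μ (ν.tilted f) hρac hint'
  rw [hkey] at hnn
  linarith

/-- Theorem 1 (robustness bound): if at each time step the shifted (test-time)
distribution `p̌ₜ` satisfies `β · KL(p̌ₜ‖pₜ) ≤ 𝕀[xₜ; x̃ₜ]`, then the total expected cost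
under the shifted distributions is bounded by the sum of the entropic risks plus the
mutual informations. -/
theorem robustness_bound
    (T : ℕ) (β : ℝ) (hβ : 1 ≤ β)
    {X Xt U : Fin (T + 1) → Type*}
    [∀ t, MeasurableSpace (X t)] [∀ t, MeasurableSpace (Xt t)] [∀ t, MeasurableSpace (U t)]
    (p : ∀ t, Measure (X t × Xt t × U t)) [∀ t, IsProbabilityMeasure (p t)]
    (c : ∀ t, X t × U t → ℝ) (hc : ∀ t, Measurable (c t))
    (hcbdd : ∀ t, ∃ C : ℝ, ∀ ω, |c t ω| ≤ C)
    (I : Fin (T + 1) → EReal)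
    (hI : ∀ t, I t = KLdiv ((p t).map (fun ω => (ω.1, ω.2.1)))
        (((p t).map (fun ω => ω.1)).prod ((p t).map (fun ω => ω.2.1))))
    (pc : ∀ t, Measure (X t × Xt t × U t)) [∀ t, IsProbabilityMeasure (pc t)]
    (hac : ∀ t, pc t ≪ p t)
    (hshift : ∀ t, ((β : ℝ) : EReal) * KLdiv (pc t) (p t) ≤ I t) :
    ∑ t : Fin (T + 1), ((∫ ω, c t (ω.1, ω.2.2) ∂(pc t) : ℝ) : EReal)
      ≤ ∑ t : Fin (T + 1),
          ((((1 / β) * Real.log (∫ ω, Real.exp (β * c t (ω.1, ω.2.2)) ∂(p t)) : ℝ) : EReal)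
            + I t) := by
  refine Finset.sum_le_sum fun t _ => ?_
  have hβ0 : (0 : ℝ) < β := lt_of_lt_of_le one_pos hβ
  set a : ℝ := ∫ ω, c t (ω.1, ω.2.2) ∂(pc t) with ha
  set L : ℝ := Real.log (∫ ω, Real.exp (β * c t (ω.1, ω.2.2)) ∂(p t)) with hL
  by_cases hintg : Integrable (llr (pc t) (p t)) (pc t)
  · -- KL divergence is finite
    set K : ℝ := ∫ ω, llr (pc t) (p t) ω ∂(pc t) with hK
    have hKL : KLdiv (pc t) (p t) = ((K : ℝ) : EReal) := by
      rw [KLdiv, if_pos ⟨hac t, hintg⟩]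
    have hsh := hshift t
    rw [hKL, ← EReal.coe_mul] at hsh
    have hKnn : 0 ≤ K := kl_nonneg' (pc t) (p t) (hac t) hintg
    -- Gibbs inequality
    have hcm : Measurable (fun ω : X t × Xt t × U t => c t (ω.1, ω.2.2)) :=
      (hc t).comp (measurable_fst.prodMk (measurable_snd.comp measurable_snd))
    obtain ⟨C, hCb⟩ := hcbdd t
    have hgibbs := gibbs_ineq (pc t) (p t) (hac t)
      (fun ω => β * c t (ω.1, ω.2.2)) (hcm.const_mul β) (|β| * C)
      (fun ω => by rw [abs_mul]; exact mul_le_mul_of_nonneg_left (hCb _) (abs_nonneg β))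
      hintg
    rw [integral_const_mul] at hgibbs
    -- hgibbs : β * a ≤ L + K
    set J := I t with hJdef
    clear_value J
    induction J using EReal.rec with
    | bot => exact absurd (le_bot_iff.mp hsh) (EReal.coe_ne_bot _)
    | coe s =>
      rw [EReal.coe_le_coe_iff] at hsh
      rw [← EReal.coe_add, EReal.coe_le_coe_iff]
      have hKs : K ≤ s := le_trans (le_mul_of_one_le_left hKnn hβ) hsh
      have hs0 : 0 ≤ s := le_trans hKnn hKs
      have h1 : β * a ≤ L + β * s := by nlinarith
      have h2 : a ≤ (L + β * s) / β := (le_div_iff₀ hβ0).2 (by linarith)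
      have h3 : (L + β * s) / β = 1 / β * L + s := by field_simp
      linarith
    | top =>
      rw [EReal.coe_add_top]
      exact le_top
  · -- KL divergence is infinite
    have hKL : KLdiv (pc t) (p t) = ⊤ := by
      rw [KLdiv, if_neg (fun h => hintg h.2)]
    have hsh := hshift t
    rw [hKL, EReal.coe_mul_top_of_pos hβ0] at hsh
    rw [top_le_iff.1 hsh, EReal.coe_add_top]
    exact le_top
end
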